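/- For every transfer system T on N5 there is a model structure on N5 in which every pair x ≤ y is a weak equivalence and whose acyclic fibrations are exactly T: there exist relations C and F on N5 such that (W, C, F) is a model structure with W = {(x,y) : x ≤ y} and F ∩ W = T. -/

import Mathlib

/-- The five-element nonmodular lattice `N₅` with `0 < A < C < 1`, `0 < B < 1`,
and `B` incomparable to `A` and `C`. -/
inductive N5 : Type
  | zero | A | B | C | one
  deriving DecidableEq

instance instFintypeN5 : Fintype N5 :=
  Fintype.ofList [N5.zero, N5.A, N5.B, N5.C, N5.one] (by intro x; cases x <;> decide)

namespace N5

def leBool : N5 → N5 → Bool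
  | zero, _ => true
  | _, one => true
  | A, A => true
  | A, C => true
  | B, B => true
  | C, C => true
  | _, _ => false

instance : LE N5 := ⟨fun x y => leBool x y = true⟩

instance : DecidableRel ((· ≤ ·) : N5 → N5 → Prop) :=
  fun x y => inferInstanceAs (Decidable (leBool x y = true))

def supFn (x y : N5) : N5 := if leBool x y then y else if leBool y x then x else one
def infFn (x y : N5) : N5 := if leBool x y then x else if leBool y x then y else zero

instance : Lattice N5 where
  le := (· ≤ ·)
  le_refl := by decide
  le_trans := by decide
  le_antisymm := by decide
  sup := supFn
  le_sup_left := by decide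
  le_sup_right := by decide
  sup_le := by decide
  inf := infFn
  inf_le_left := by decide
  inf_le_right := by decide
  le_inf := by decide

end N5

section Defs

variable {L : Type*} [Lattice L]

/-- `llp S a b`: `a ≤ b` and `(a, b)` has the left lifting property with respect to
every pair in `S`. -/
def llp (S : L → L → Prop) (a b : L) : Prop :=
  a ≤ b ∧ ∀ x y, S x y → a ≤ x → b ≤ y → b ≤ x

/-- `rlp S x y`: `x ≤ y` and every pair in `S` has the left lifting property with
respect to `(x, y)`. -/
def rlp (S : L → L → Prop) (x y : L) : Prop :=
  x ≤ y ∧ ∀ a b, S a b → a ≤ x → b ≤ y → b ≤ x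

/-- A transfer system: a reflexive transitive subrelation of `≤` closed under pullbacks. -/
structure IsTransferSystem (T : L → L → Prop) : Prop where
  subLE : ∀ x y, T x y → x ≤ y
  refl : ∀ x, T x x
  trans : ∀ x y z, T x y → T y z → T x z
  pullback : ∀ x y z, T x y → z ≤ y → T (x ⊓ z) z

/-- A cotransfer system: a reflexive transitive subrelation of `≤` closed under pushouts. -/
structure IsCotransferSystem (K : L → L → Prop) : Prop where
  subLE : ∀ x y, K x y → x ≤ y
  refl : ∀ x, K x x
  trans : ∀ x y z, K x y → K y z → K x z
  pushout : ∀ x y z, K x y → x ≤ z → K z (y ⊔ z)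

/-- A wide decomposable subcategory of a lattice. -/
structure IsWideDecomposable (W : L → L → Prop) : Prop where
  subLE : ∀ x y, W x y → x ≤ y
  refl : ∀ x, W x x
  trans : ∀ x y z, W x y → W y z → W x z
  decomp : ∀ x y z, W x z → x ≤ y → y ≤ z → W x y ∧ W y z

/-- A model structure on a lattice, given by weak equivalences `W`, cofibrations `C`
and fibrations `F`. -/
structure IsModelStructure (W C F : L → L → Prop) : Prop where
  W_subLE : ∀ x y, W x y → x ≤ y
  W_refl : ∀ x, W x x
  C_subLE : ∀ x y, C x y → x ≤ y
  C_refl : ∀ x, C x x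
  F_subLE : ∀ x y, F x y → x ≤ y
  F_refl : ∀ x, F x x
  two_three_comp : ∀ x y z, x ≤ y → y ≤ z → W x y → W y z → W x z
  two_three_right : ∀ x y z, x ≤ y → y ≤ z → W x y → W x z → W y z
  two_three_left : ∀ x y z, x ≤ y → y ≤ z → W y z → W x z → W x y
  lift_AC : ∀ x y, (C x y ∧ W x y) ↔ llp F x y
  lift_C : ∀ x y, C x y ↔ llp (fun a b => F a b ∧ W a b) x y
  lift_F : ∀ x y, F x y ↔ rlp (fun a b => C a b ∧ W a b) x y
  lift_AF : ∀ x y, (F x y ∧ W x y) ↔ rlp C x y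
  fact_C_AF : ∀ x y, x ≤ y → ∃ z, x ≤ z ∧ z ≤ y ∧ C x z ∧ F z y ∧ W z y
  fact_AC_F : ∀ x y, x ≤ y → ∃ z, x ≤ z ∧ z ≤ y ∧ C x z ∧ W x z ∧ F z y

/-- The smallest transfer system containing `S`: the intersection of all transfer
systems containing `S`. -/
def genTS (S : L → L → Prop) (x y : L) : Prop :=
  ∀ T : L → L → Prop, IsTransferSystem T → (∀ a b, S a b → T a b) → T x y

end Defs

/-- A bundled model structure on a lattice. -/
structure ModelStructure (L : Type*) [Lattice L] where
  W : L → L → Prop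
  C : L → L → Prop
  F : L → L → Prop
  isModel : IsModelStructure W C F

/-- `M'` is a left Bousfield localization of `M`: same cofibrations, more weak equivalences. -/
def IsLeftBousfieldLoc {L : Type*} [Lattice L] (M M' : ModelStructure L) : Prop :=
  M'.C = M.C ∧ ∀ x y, M.W x y → M'.W x y

/-- `M'` is a right Bousfield localization of `M`: same fibrations, more weak equivalences. -/
def IsRightBousfieldLoc {L : Type*} [Lattice L] (M M' : ModelStructure L) : Prop :=
  M'.F = M.F ∧ ∀ x y, M.W x y → M'.W x y



section Aux

lemma TS.factor_min (T : N5 → N5 → Prop) (hT : IsTransferSystem T) (x y : N5) (hxy : x ≤ y) :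
    ∃ z, x ≤ z ∧ z ≤ y ∧ T z y ∧ ∀ w, x ≤ w → w ≤ y → T w y → z ≤ w := by
  classical
  set p : N5 → Prop := fun w => x ≤ w ∧ w ≤ y ∧ T w y with hp
  let s : Finset N5 := Finset.univ.filter p
  have hy : y ∈ s := by simp [s, hp, hxy, hT.refl y]
  have hne : s.Nonempty := ⟨y, hy⟩
  have closed : ∀ a ∈ setOf p, ∀ b ∈ setOf p, a ⊓ b ∈ setOf p := by
    rintro a ⟨ha1, ha2, ha3⟩ b ⟨hb1, hb2, hb3⟩
    exact ⟨le_inf ha1 hb1, inf_le_right.trans hb2,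
      hT.trans _ _ _ (hT.pullback a y b ha3 hb2) hb3⟩
  have hz : s.inf' hne id ∈ setOf p :=
    Finset.inf'_mem (setOf p) closed s hne id (by intro i hi; exact (Finset.mem_filter.mp hi).2)
  obtain ⟨h1, h2, h3⟩ := hz
  refine ⟨s.inf' hne id, h1, h2, h3, fun w hw1 hw2 hw3 => ?_⟩
  exact Finset.inf'_le id (by simp [s, hp, hw1, hw2, hw3])

lemma TS.llp_of_min (T : N5 → N5 → Prop) (hT : IsTransferSystem T) {x y z : N5}
    (hxz : x ≤ z) (hzy : z ≤ y) (hTz : T z y)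
    (hmin : ∀ w, x ≤ w → w ≤ y → T w y → z ≤ w) : llp T x z := by
  refine ⟨hxz, fun a b hab hxa hzb => ?_⟩
  have h1 : T (a ⊓ z) z := hT.pullback a b z hab hzb
  have h2 : T (a ⊓ z) y := hT.trans _ _ _ h1 hTz
  have h3 : z ≤ a ⊓ z := hmin _ (le_inf hxa hxz) (inf_le_right.trans hzy) h2
  exact h3.trans inf_le_left

lemma TS.rlp_llp (T : N5 → N5 → Prop) (hT : IsTransferSystem T) (x y : N5) :
    T x y ↔ rlp (llp T) x y := by
  constructor
  · intro hxy
    refine ⟨hT.subLE _ _ hxy, fun a b hab hax hby => ?_⟩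
    have h1 : T (x ⊓ b) b := hT.pullback x y b hxy hby
    exact hab.2 _ _ h1 (le_inf hax hab.1) le_rfl |>.trans inf_le_left
  · rintro ⟨hxy, h⟩
    obtain ⟨z, h1, h2, h3, h4⟩ := TS.factor_min T hT x y hxy
    have hllp := TS.llp_of_min T hT h1 h2 h3 h4
    have := h x z hllp le_rfl h2
    exact le_antisymm this h1 ▸ h3

end Aux

/-- Every transfer system on `N5` is the class of acyclic fibrations of
a model structure whose weak equivalences are all pairs `x ≤ y`. -/
theorem every_transfer_system_is_AF_of_all_weak_equivalences
    (T : N5 → N5 → Prop) (hT : IsTransferSystem T) :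
    ∃ C F : N5 → N5 → Prop,
      IsModelStructure (fun x y : N5 => x ≤ y) C F ∧
      (fun x y => F x y ∧ x ≤ y) = T := by

  classical
  refine ⟨llp T, T, ?_, ?_⟩
  · constructor
    · exact fun x y h => h
    · exact fun x => le_refl x
    · exact fun x y h => h.1
    · exact fun x => ⟨le_rfl, fun a b _ h _ => h⟩
    · exact hT.subLE
    · exact hT.refl
    · exact fun x y z h1 h2 _ _ => h1.trans h2
    · exact fun x y z h1 h2 _ _ => h2
    · exact fun x y z h1 h2 _ _ => h1
    · intro x y
      constructor
      · exact fun h => h.1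
      · exact fun h => ⟨h, h.1⟩
    · intro x y
      constructor
      · intro h
        refine ⟨h.1, fun a b hab hxa hyb => h.2 a b hab.1 hxa hyb⟩
      · intro h
        exact ⟨h.1, fun a b hab hxa hyb => h.2 a b ⟨hab, hT.subLE _ _ hab⟩ hxa hyb⟩
    · intro x y
      rw [TS.rlp_llp T hT]
      constructor
      · intro ⟨h1, h2⟩
        exact ⟨h1, fun a b hab => h2 a b hab.1⟩
      · intro ⟨h1, h2⟩
        exact ⟨h1, fun a b hab => h2 a b ⟨hab, hab.1⟩⟩
    · intro x y
      rw [TS.rlp_llp T hT]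
      constructor
      · exact fun h => h.1
      · exact fun h => ⟨h, h.1⟩
    · intro x y hxy
      obtain ⟨z, h1, h2, h3, h4⟩ := TS.factor_min T hT x y hxy
      exact ⟨z, h1, h2, TS.llp_of_min T hT h1 h2 h3 h4, h3, h2⟩
    · intro x y hxy
      obtain ⟨z, h1, h2, h3, h4⟩ := TS.factor_min T hT x y hxy
      exact ⟨z, h1, h2, TS.llp_of_min T hT h1 h2 h3 h4, h1, h3⟩
  · funext x y
    exact propext ⟨fun h => h.1, fun h => ⟨h, hT.subLE _ _ h⟩⟩
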